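/- arXiv:2009.11010 — 2 statements merged into one kernel-verified Lean document; each statement's English description precedes it below -/
import Mathlib

section
/- Let 0 < p ≤ n and let λ₁ > λ₂ > ⋯ > λ_p > 0 be real numbers. Then the equation (1/p) Σᵢ λᵢ/(λᵢ − x) = n/p (with c = p/n ≤ 1) has p real solutions ν₁ > ν₂ > ⋯ > ν_p which interlace: λ₁ > ν₁ > λ₂ > ν₂ > ⋯ > λ_p > ν_p > 0. -/
open Finset

open Filter Topology

private lemma aux_contAt {p : ℕ} (lam : Fin p → ℝ) (s : Finset (Fin p)) {x : ℝ}
    (hx : ∀ j ∈ s, x ≠ lam j) :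
    ContinuousAt (fun y => ∑ j ∈ s, lam j / (lam j - y)) x := by
  have h : ∀ j ∈ s, ContinuousAt (fun y => lam j / (lam j - y)) x := fun j hj =>
    continuousAt_const.div ((continuous_const.sub continuous_id).continuousAt)
      (sub_ne_zero.mpr fun e => hx j hj e.symm)
  exact tendsto_finset_sum s h

private lemma aux_mono {p : ℕ} (hp : 0 < p) (lam : Fin p → ℝ) (hpos : ∀ i, 0 < lam i)
    {x y : ℝ} (hxy : x < y) (h : ∀ j, 0 < (lam j - x) * (lam j - y)) :
    ∑ j, lam j / (lam j - x) < ∑ j, lam j / (lam j - y) := by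
  have : Nonempty (Fin p) := Fin.pos_iff_nonempty.mp hp
  have hne : (univ : Finset (Fin p)).Nonempty := univ_nonempty
  refine Finset.sum_lt_sum_of_nonempty hne ?_
  intro j _
  have hj := h j
  have hx0 : lam j - x ≠ 0 := by
    intro e; rw [e, zero_mul] at hj; exact lt_irrefl 0 hj
  have hy0 : lam j - y ≠ 0 := by
    intro e; rw [e, mul_zero] at hj; exact lt_irrefl 0 hj
  have key : lam j / (lam j - y) - lam j / (lam j - x)
      = lam j * (y - x) / ((lam j - x) * (lam j - y)) := by
    field_simp; ring
  have hpos' : 0 < lam j / (lam j - y) - lam j / (lam j - x) := by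
    rw [key]; exact div_pos (mul_pos (hpos j) (sub_pos.mpr hxy)) hj
  linarith

/-- pole from the left : sum tends to +∞ -/
private lemma aux_atTop {p : ℕ} (lam : Fin p → ℝ) (hpos : ∀ i, 0 < lam i)
    (hinj : Function.Injective lam) (k : Fin p) :
    Tendsto (fun y => ∑ j, lam j / (lam j - y)) (𝓝[<] lam k) atTop := by
  classical
  have hden : Tendsto (fun z => lam k - z) (𝓝[<] lam k) (𝓝[>] (0 : ℝ)) := by
    rw [tendsto_nhdsWithin_iff]
    constructor
    · have h : Tendsto (fun z : ℝ => lam k - z) (𝓝 (lam k)) (𝓝 (lam k - lam k)) :=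
        tendsto_const_nhds.sub tendsto_id
      simpa using h.mono_left nhdsWithin_le_nhds
    · filter_upwards [self_mem_nhdsWithin] with z hz
      exact Set.mem_Ioi.mpr (sub_pos.mpr (Set.mem_Iio.mp hz))
  have h1 : Tendsto (fun z => lam k / (lam k - z)) (𝓝[<] lam k) atTop := by
    have := Tendsto.const_mul_atTop (hpos k) (tendsto_inv_nhdsGT_zero.comp hden)
    simpa [div_eq_mul_inv, Function.comp] using this
  have h2 : ContinuousAt (fun y => ∑ j ∈ univ.erase k, lam j / (lam j - y)) (lam k) :=
    aux_contAt lam _ (fun j hj e => (mem_erase.mp hj).1 (hinj e.symm))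
  have h2' : Tendsto (fun y => ∑ j ∈ univ.erase k, lam j / (lam j - y)) (𝓝[<] lam k)
      (𝓝 (∑ j ∈ univ.erase k, lam j / (lam j - lam k))) :=
    h2.tendsto.mono_left nhdsWithin_le_nhds
  have := h2'.add_atTop h1
  refine this.congr fun z => ?_
  rw [add_comm]
  exact Finset.add_sum_erase univ (fun j => lam j / (lam j - z)) (mem_univ k)

/-- pole from the right : sum tends to -∞ -/
private lemma aux_atBot {p : ℕ} (lam : Fin p → ℝ) (hpos : ∀ i, 0 < lam i)
    (hinj : Function.Injective lam) (k : Fin p) :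
    Tendsto (fun y => ∑ j, lam j / (lam j - y)) (𝓝[>] lam k) atBot := by
  classical
  have hden : Tendsto (fun z => z - lam k) (𝓝[>] lam k) (𝓝[>] (0 : ℝ)) := by
    rw [tendsto_nhdsWithin_iff]
    constructor
    · have h : Tendsto (fun z : ℝ => z - lam k) (𝓝 (lam k)) (𝓝 (lam k - lam k)) :=
        tendsto_id.sub tendsto_const_nhds
      simpa using h.mono_left nhdsWithin_le_nhds
    · filter_upwards [self_mem_nhdsWithin] with z hz
      exact Set.mem_Ioi.mpr (sub_pos.mpr (Set.mem_Ioi.mp hz))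
  have h1 : Tendsto (fun z => lam k / (lam k - z)) (𝓝[>] lam k) atBot := by
    have h1' : Tendsto (fun z => lam k / (z - lam k)) (𝓝[>] lam k) atTop := by
      have := Tendsto.const_mul_atTop (hpos k) (tendsto_inv_nhdsGT_zero.comp hden)
      simpa [div_eq_mul_inv, Function.comp] using this
    have := tendsto_neg_atTop_atBot.comp h1'
    refine this.congr fun z => ?_
    simp only [Function.comp_apply]
    rw [← div_neg, neg_sub]
  have h2 : ContinuousAt (fun y => ∑ j ∈ univ.erase k, lam j / (lam j - y)) (lam k) :=
    aux_contAt lam _ (fun j hj e => (mem_erase.mp hj).1 (hinj e.symm))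
  have h2' : Tendsto (fun y => ∑ j ∈ univ.erase k, lam j / (lam j - y)) (𝓝[>] lam k)
      (𝓝 (∑ j ∈ univ.erase k, lam j / (lam j - lam k))) :=
    h2.tendsto.mono_left nhdsWithin_le_nhds
  have := h2'.add_atBot h1
  refine this.congr fun z => ?_
  rw [add_comm]
  exact Finset.add_sum_erase univ (fun j => lam j / (lam j - z)) (mem_univ k)

/-- For `0 < p < n` and distinct positive reals `λ₁ > ⋯ > λ_p`, the equation
`(1/p) Σᵢ λᵢ/(λᵢ − x) = n/p` has exactly `p` real solutions `ν₁ > ⋯ > ν_p`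
which interlace: `λ₁ > ν₁ > λ₂ > ν₂ > ⋯ > λ_p > ν_p > 0`. -/
theorem exists_interlacing_roots (p n : ℕ) (hp : 0 < p) (hpn : p < n)
    (lam : Fin p → ℝ) (hpos : ∀ i, 0 < lam i) (hmono : StrictAnti lam) :
    ∃ ν : Fin p → ℝ,
      (∀ i, (1 / (p : ℝ)) * ∑ j, lam j / (lam j - ν i) = (n : ℝ) / p) ∧
      (∀ i, 0 < ν i) ∧
      (∀ i, ν i < lam i) ∧
      (∀ i : Fin p, ∀ h : (i : ℕ) + 1 < p, lam ⟨(i : ℕ) + 1, h⟩ < ν i) ∧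
      (∀ x : ℝ, (∀ j, x ≠ lam j) →
        (1 / (p : ℝ)) * ∑ j, lam j / (lam j - x) = (n : ℝ) / p → ∃ i, x = ν i) := by
  classical
  have hpR : (0 : ℝ) < p := Nat.cast_pos.mpr hp
  have hpn' : (p : ℝ) < n := Nat.cast_lt.mpr hpn
  have hinj : Function.Injective lam := hmono.injective
  haveI : Nonempty (Fin p) := Fin.pos_iff_nonempty.mp hp
  set g : ℝ → ℝ := fun x => ∑ j, lam j / (lam j - x) with hg
  set lo : Fin p → ℝ := fun i =>
    if h : (i : ℕ) + 1 < p then lam ⟨(i : ℕ) + 1, h⟩ else 0 with hlodef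
  have hlo_nonneg : ∀ i, 0 ≤ lo i := by
    intro i
    by_cases h : (i : ℕ) + 1 < p
    · simp only [hlodef, dif_pos h]; exact (hpos _).le
    · simp [hlodef, h]
  have hlo_lt : ∀ i, lo i < lam i := by
    intro i
    by_cases h : (i : ℕ) + 1 < p
    · simp only [hlodef, dif_pos h]
      exact hmono (by simp [Fin.lt_def])
    · simp only [hlodef, dif_neg h]; exact hpos i
  -- every point in the open interval is on the correct side of every pole
  have hside : ∀ (i : Fin p) (z : ℝ), z ∈ Set.Ioo (lo i) (lam i) →
      ∀ j, (j ≤ i → z < lam j) ∧ (i < j → lam j < z) := by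
    intro i z hz j
    constructor
    · intro hji
      exact lt_of_lt_of_le hz.2 (hmono.antitone hji)
    · intro hij
      have hip : (i : ℕ) + 1 < p := lt_of_le_of_lt (Nat.succ_le_of_lt hij) j.isLt
      have h1 : lam j ≤ lam ⟨(i : ℕ) + 1, hip⟩ :=
        hmono.antitone (by simpa [Fin.le_def] using Nat.succ_le_of_lt hij)
      have h2 : lam ⟨(i : ℕ) + 1, hip⟩ = lo i := by simp [hlodef, hip]
      calc lam j ≤ lo i := h2 ▸ h1
        _ < z := hz.1
  have hprod : ∀ (i : Fin p) (x y : ℝ), x ∈ Set.Ioo (lo i) (lam i) →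
      y ∈ Set.Ioo (lo i) (lam i) → ∀ j, 0 < (lam j - x) * (lam j - y) := by
    intro i x y hx hy j
    rcases le_or_gt j i with hji | hij
    · exact mul_pos (sub_pos.mpr ((hside i x hx j).1 hji))
        (sub_pos.mpr ((hside i y hy j).1 hji))
    · exact mul_pos_of_neg_of_neg (sub_neg.mpr ((hside i x hx j).2 hij))
        (sub_neg.mpr ((hside i y hy j).2 hij))
  have hnotpole : ∀ (i : Fin p) (z : ℝ), z ∈ Set.Ioo (lo i) (lam i) →
      ∀ j, z ≠ lam j := by
    intro i z hz j
    rcases le_or_gt j i with hji | hij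
    · exact ne_of_lt ((hside i z hz j).1 hji)
    · exact ne_of_gt ((hside i z hz j).2 hij)
  -- existence of a root in each interval
  have hex : ∀ i : Fin p, ∃ z ∈ Set.Ioo (lo i) (lam i), g z = n := by
    intro i
    -- a point with g a < n
    have haux : ∃ a ∈ Set.Ioo (lo i) (lam i), g a < n := by
      have hmem : Set.Ioo (lo i) (lam i) ∈ 𝓝[>] (lo i) :=
        Ioo_mem_nhdsGT_of_mem ⟨le_refl _, hlo_lt i⟩
      have hsmall : ∀ᶠ z in 𝓝[>] (lo i), g z < n := by
        by_cases h : (i : ℕ) + 1 < p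
        · have hEq : lo i = lam ⟨(i : ℕ) + 1, h⟩ := by simp [hlodef, h]
          have := aux_atBot lam hpos hinj ⟨(i : ℕ) + 1, h⟩
          rw [← hEq] at this
          exact this.eventually (eventually_lt_atBot _)
        · have hEq : lo i = 0 := by simp [hlodef, h]
          have hg0 : g 0 = p := by
            simp only [hg, sub_zero]
            rw [Finset.sum_congr rfl fun j _ => div_self (hpos j).ne']
            simp
          have hc : ContinuousAt g 0 :=
            aux_contAt lam univ (fun j _ => (hpos j).ne)
          have : Tendsto g (𝓝[>] (lo i)) (𝓝 (p : ℝ)) := by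
            rw [hEq, ← hg0]
            exact hc.tendsto.mono_left nhdsWithin_le_nhds
          exact this.eventually (eventually_lt_nhds hpn')
      obtain ⟨a, ha1, ha2⟩ := (hsmall.and (hmem)).exists
      exact ⟨a, ha2, ha1⟩
    obtain ⟨a, ha_mem, ha_lt⟩ := haux
    -- a point b ∈ (a, lam i) with n < g b
    have hbux : ∃ b ∈ Set.Ioo a (lam i), (n : ℝ) < g b := by
      have hmem : Set.Ioo a (lam i) ∈ 𝓝[<] (lam i) :=
        Ioo_mem_nhdsLT_of_mem ⟨ha_mem.2, le_refl _⟩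
      have hbig : ∀ᶠ z in 𝓝[<] (lam i), (n : ℝ) < g z :=
        (aux_atTop lam hpos hinj i).eventually (eventually_gt_atTop _)
      obtain ⟨b, hb1, hb2⟩ := (hbig.and (hmem)).exists
      exact ⟨b, hb2, hb1⟩
    obtain ⟨b, hb_mem, hb_gt⟩ := hbux
    have hb_mem' : b ∈ Set.Ioo (lo i) (lam i) := ⟨lt_trans ha_mem.1 hb_mem.1, hb_mem.2⟩
    have hsub : Set.Icc a b ⊆ Set.Ioo (lo i) (lam i) := fun z hz =>
      ⟨lt_of_lt_of_le ha_mem.1 hz.1, lt_of_le_of_lt hz.2 hb_mem'.2⟩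
    have hcont : ContinuousOn g (Set.Icc a b) := fun z hz =>
      (aux_contAt lam univ (fun j _ => hnotpole i z (hsub hz) j)).continuousWithinAt
    have : (n : ℝ) ∈ Set.Ioo (g a) (g b) := ⟨ha_lt, hb_gt⟩
    obtain ⟨z, hz_mem, hz_eq⟩ := intermediate_value_Ioo hb_mem.1.le hcont this
    exact ⟨z, hsub ⟨hz_mem.1.le, hz_mem.2.le⟩, hz_eq⟩
  choose ν hν_mem hν_eq using hex
  refine ⟨ν, ?_, ?_, ?_, ?_, ?_⟩
  · intro i
    rw [show ∑ j, lam j / (lam j - ν i) = g (ν i) from rfl, hν_eq i]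
    field_simp
  · intro i
    exact lt_of_le_of_lt (hlo_nonneg i) (hν_mem i).1
  · intro i
    exact (hν_mem i).2
  · intro i h
    have : lo i = lam ⟨(i : ℕ) + 1, h⟩ := by simp [hlodef, h]
    exact this ▸ (hν_mem i).1
  · intro x hxne heq
    have hgx : g x = n := by
      have h1 : (1 / (p : ℝ)) * g x = (n : ℝ) / p := heq
      field_simp at h1
      linarith
    -- find the interval containing x
    have hS : (univ.filter fun i => x < lam i).Nonempty := by
      by_contra hc
      rw [Finset.not_nonempty_iff_eq_empty, Finset.filter_eq_empty_iff] at hc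
      have hall : ∀ j, lam j < x := fun j =>
        lt_of_le_of_ne (not_lt.mp (hc (mem_univ j))) (fun e => hxne j e.symm)
      have : g x < 0 := Finset.sum_neg
        (fun j _ => div_neg_of_pos_of_neg (hpos j) (sub_neg.mpr (hall j)))
        (univ_nonempty (α := Fin p))
      rw [hgx] at this
      exact absurd this (not_lt.mpr (Nat.cast_nonneg n))
    set i := (univ.filter fun i => x < lam i).max' hS with hi
    have hxi : x < lam i := (Finset.mem_filter.mp ((univ.filter _).max'_mem hS)).2
    have hxlo : lo i < x := by
      by_cases h : (i : ℕ) + 1 < p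
      · have hEq : lo i = lam ⟨(i : ℕ) + 1, h⟩ := by simp [hlodef, h]
        rw [hEq]
        rcases lt_trichotomy x (lam ⟨(i : ℕ) + 1, h⟩) with hlt | he | hgt
        · exfalso
          have hmem : (⟨(i : ℕ) + 1, h⟩ : Fin p) ∈ univ.filter fun k => x < lam k :=
            Finset.mem_filter.mpr ⟨mem_univ _, hlt⟩
          have := Finset.le_max' _ _ hmem
          rw [← hi] at this
          have hii : i < (⟨(i : ℕ) + 1, h⟩ : Fin p) := by simp [Fin.lt_def]
          exact absurd this (not_le.mpr hii)
        · exact absurd he (hxne _)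
        · exact hgt
      · have hEq : lo i = 0 := by simp [hlodef, h]
        rw [hEq]
        -- show 0 < x
        by_contra hx0
        push_neg at hx0
        have hle : g x ≤ p := by
          rw [hg]
          calc ∑ j, lam j / (lam j - x) ≤ ∑ _j : Fin p, (1 : ℝ) := by
                refine Finset.sum_le_sum fun j _ => ?_
                rw [div_le_one (by linarith [hpos j] : (0:ℝ) < lam j - x)]
                linarith
            _ = p := by simp
        rw [hgx] at hle
        linarith
    have hxmem : x ∈ Set.Ioo (lo i) (lam i) := ⟨hxlo, hxi⟩
    refine ⟨i, ?_⟩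
    rcases lt_trichotomy x (ν i) with hlt | he | hgt
    · exfalso
      have := aux_mono hp lam hpos hlt (hprod i x (ν i) hxmem (hν_mem i))
      rw [show ∑ j, lam j / (lam j - x) = g x from rfl,
        show ∑ j, lam j / (lam j - ν i) = g (ν i) from rfl, hgx, hν_eq i] at this
      exact lt_irrefl _ this
    · exact he
    · exfalso
      have := aux_mono hp lam hpos hgt (hprod i (ν i) x (hν_mem i) hxmem)
      rw [show ∑ j, lam j / (lam j - x) = g x from rfl,
        show ∑ j, lam j / (lam j - ν i) = g (ν i) from rfl, hgx, hν_eq i] at this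
      exact lt_irrefl _ this
end

section
/- With λ's and ν's interlacing as λ₁ > ν₁ > ⋯ > λ_p > ν_p > 0 and θ₁ defined as above, θ₁(1) < 1 + λ₂/(λ₁ − λ₂). -/
/-!
As `λ₁ > 0`, the map `f x = x / (λ₁ - x)` is strictly increasing below `λ₁`, so interlacing gives
`f λⱼ₊₁ < f νⱼ`. Hence in `Σ_{j≥2} (f λⱼ - f νⱼ)` each `f λⱼ₊₁` is dominated by the preceding
`f νⱼ`, leaving at most `f λ₂ - f ν_p < f λ₂`.
-/

open Finset

theorem div_sub_lt_div_sub {K : Type*} [Field K] [LinearOrder K] [IsStrictOrderedRing K]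
    {c x y : K} (hc : 0 < c) (hxy : x < y) (hy : y < c) :
    x / (c - x) < y / (c - y) := by
  rw [div_lt_div_iff₀ (by linarith) (by linarith)]
  nlinarith

theorem Fin.sum_sub_lt_of_succ_le_castSucc {α : Type*} [AddCommGroup α] [PartialOrder α]
    [IsOrderedAddMonoid α] {n : ℕ} (a b : Fin (n + 1) → α)
    (hab : ∀ i : Fin n, a i.succ ≤ b i.castSucc) (hb : 0 < b (Fin.last n)) :
    ∑ i, (a i - b i) < a 0 := by
  rw [sum_sub_distrib, Fin.sum_univ_succ, Fin.sum_univ_castSucc, add_sub_assoc,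
    add_lt_iff_neg_left, sub_neg]
  exact lt_add_of_le_of_pos (sum_le_sum fun i _ => hab i) hb

theorem Fin.sum_univ_filter_ne_zero {M : Type*} [AddCommGroup M] {n : ℕ} (f : Fin (n + 1) → M) :
    ∑ j ∈ univ.filter (· ≠ 0), f j = ∑ i : Fin n, f i.succ := by
  rw [filter_ne' univ 0, sum_erase_eq_sub (mem_univ 0), Fin.sum_univ_succ, add_sub_cancel_left]

/-- Under the interlacing `λ₁ > ν₁ > λ₂ > ν₂ > ⋯ > λ_p > ν_p > 0`,
`θ₁(1) = 1 + Σ_{j≥2}(λⱼ/(λ₁−λⱼ) − νⱼ/(λ₁−νⱼ)) < 1 + λ₂/(λ₁ − λ₂)`. -/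
theorem theta_upper_bound (p : ℕ) [NeZero p] (hp : 2 ≤ p) (lam ν : Fin p → ℝ)
    (hln : ∀ i, ν i < lam i)
    (hint : ∀ i : Fin p, ∀ h : (i : ℕ) + 1 < p, lam ⟨(i : ℕ) + 1, h⟩ < ν i)
    (hνpos : ∀ i, 0 < ν i) :
    1 + ∑ j ∈ univ.filter (· ≠ (0 : Fin p)),
        (lam j / (lam 0 - lam j) - ν j / (lam 0 - ν j))
      < 1 + lam ⟨1, by omega⟩ / (lam 0 - lam ⟨1, by omega⟩) := by
  obtain ⟨n, rfl⟩ : ∃ n, p = n + 2 := ⟨p - 2, by omega⟩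
  have hanti : StrictAnti lam :=
    Fin.strictAnti_iff_succ_lt.2 fun i => (hint i.castSucc i.succ.isLt).trans (hln _)
  have hν_lt : ∀ i, ν i < lam 0 := fun i => (hln i).trans_le (hanti.antitone (Fin.zero_le i))
  have hc : 0 < lam 0 := (hνpos 0).trans (hν_lt 0)
  rw [Fin.sum_univ_filter_ne_zero, add_lt_add_iff_left]
  refine Fin.sum_sub_lt_of_succ_le_castSucc (fun i => lam i.succ / (lam 0 - lam i.succ))
    (fun i => ν i.succ / (lam 0 - ν i.succ)) (fun i => ?_) ?_
  · exact (div_sub_lt_div_sub hc (hint i.castSucc.succ i.succ.succ.isLt) (hν_lt _)).le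
  · exact div_pos (hνpos _) (sub_pos.2 (hν_lt _))
end
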